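/- If c = lim_{n→∞} n(1-λₙ) exists with c > 0 and λₙ ∈ (0,1), then n · (1-λₙ)(1+λₙⁿ)/((1+λₙ)(1-λₙⁿ)) → (c/2)·(e^c+1)/(e^c-1) as n → ∞. -/
import Mathlib


open Filter Real

/-- If `c = lim n(1-λₙ)` exists with `c > 0` and `λₙ ∈ (0,1)`, then
`n (1-λₙ)(1+λₙⁿ)/((1+λₙ)(1-λₙⁿ)) → (c/2)(e^c+1)/(e^c-1)`. -/
theorem stmt_3 (lam : ℕ → ℝ) (c : ℝ) (hc : 0 < c)
    (hlam : ∀ n, lam n ∈ Set.Ioo (0 : ℝ) 1)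
    (hlim : Tendsto (fun n : ℕ => (n : ℝ) * (1 - lam n)) atTop (nhds c)) :
    Tendsto (fun n : ℕ =>
        (n : ℝ) * ((1 - lam n) * (1 + (lam n) ^ n) / ((1 + lam n) * (1 - (lam n) ^ n))))
      atTop (nhds ((c / 2) * (Real.exp c + 1) / (Real.exp c - 1))) := by
  have hne1 : ∀ n, lam n - 1 ≠ 0 := fun n => sub_ne_zero.mpr (ne_of_lt (hlam n).2)
  -- λₙ → 1
  have hinv : Tendsto (fun n : ℕ => ((n : ℝ))⁻¹) atTop (nhds 0) :=
    tendsto_inv_atTop_nhds_zero_nat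
  have hsub : Tendsto (fun n : ℕ => 1 - lam n) atTop (nhds 0) := by
    have h := hlim.mul hinv
    rw [mul_zero] at h
    refine h.congr' ?_
    filter_upwards [eventually_ge_atTop 1] with n hn
    have hn0 : (n : ℝ) ≠ 0 := Nat.cast_ne_zero.mpr (by omega)
    field_simp
  have hlam1 : Tendsto lam atTop (nhds 1) := by
    have h := (tendsto_const_nhds (x := (1:ℝ))).sub hsub
    simpa using h
  -- slope of log at 1
  have hd : HasDerivAt Real.log 1 1 := by simpa using Real.hasDerivAt_log one_ne_zero
  have hslope := hasDerivAt_iff_tendsto_slope.mp hd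
  have hlamne : Tendsto lam atTop (nhdsWithin (1:ℝ) {(1:ℝ)}ᶜ) := by
    refine tendsto_nhdsWithin_of_tendsto_nhds_of_eventually_within _ hlam1 ?_
    filter_upwards with n
    exact ne_of_lt (hlam n).2
  have hslope' : Tendsto (fun n => Real.log (lam n) / (lam n - 1)) atTop (nhds 1) := by
    have h := hslope.comp hlamne
    refine h.congr ?_
    intro n
    simp [slope_def_field]
  -- n * log λₙ → -c
  have hnlog : Tendsto (fun n : ℕ => (n : ℝ) * Real.log (lam n)) atTop (nhds (-c)) := by
    have h := (hlim.mul hslope').neg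
    rw [mul_one] at h
    refine h.congr ?_
    intro n
    field_simp [hne1 n]
    ring
  -- λₙ ^ n → exp (-c)
  have hpow : Tendsto (fun n : ℕ => (lam n) ^ n) atTop (nhds (Real.exp (-c))) := by
    have h := (Real.continuous_exp.tendsto _).comp hnlog
    refine h.congr ?_
    intro n
    simp only [Function.comp_apply]
    rw [Real.exp_nat_mul, Real.exp_log (hlam n).1]
  -- combine
  have hden : (1 + (1:ℝ)) * (1 - Real.exp (-c)) ≠ 0 := by
    have h1 : Real.exp (-c) < 1 := by
      rw [Real.exp_lt_one_iff]; linarith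
    have h2 : (0:ℝ) < 1 - Real.exp (-c) := by linarith
    positivity
  have hmain := (hlim.mul ((tendsto_const_nhds (x := (1:ℝ))).add hpow)).div
    (((tendsto_const_nhds (x := (1:ℝ))).add hlam1).mul
      ((tendsto_const_nhds (x := (1:ℝ))).sub hpow)) hden
  have hval : c * (1 + Real.exp (-c)) / ((1 + 1) * (1 - Real.exp (-c)))
      = (c / 2) * (Real.exp c + 1) / (Real.exp c - 1) := by
    have he : Real.exp c ≠ 0 := (Real.exp_pos c).ne'
    have he1 : Real.exp c - 1 ≠ 0 := by
      have h := Real.exp_lt_exp.mpr hc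
      rw [Real.exp_zero] at h
      linarith
    rw [Real.exp_neg]
    field_simp
    norm_num
  rw [← hval]
  refine hmain.congr ?_
  intro n
  simp only [Pi.div_apply]
  ring
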